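/- arXiv:2002.02199 — 4 statements merged into one kernel-verified Lean document; each statement's English description precedes it below -/
import Mathlib

section
/- A conformal Killing field on ℝⁿ of the form v(x) = X - F·x + λ·x - ⟨Y,x⟩·x + (½)⟨x,x⟩·Y (with X, Y ∈ ℝⁿ, λ ∈ ℝ, F skew-symmetric) is everywhere tangent to the line L = {t·U : t ∈ ℝ} (U a unit vector) if and only if X = f·U for some f ∈ ℝ, F·U = 0, and Y = h·U for some h ∈ ℝ. -/
open Matrix

/-- A conformal Killing field `v(x) = X - F·x + λx - ⟨Y,x⟩x + ½⟨x,x⟩Y` on `ℝⁿ`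
is everywhere tangent to the line `{tU}` (`U` a unit vector) iff `X = fU`,
`F·U = 0`, and `Y = hU`. -/
theorem symmetry_algebra_of_a_line (n : ℕ) (U X Y : Fin n → ℝ) (l : ℝ)
    (F : Matrix (Fin n) (Fin n) ℝ) (hF : Fᵀ = -F) (hU : U ⬝ᵥ U = 1) :
    (∀ t : ℝ, ∃ c : ℝ,
        X - F.mulVec (t • U) + l • (t • U) - (Y ⬝ᵥ (t • U)) • (t • U)
          + (2⁻¹ * ((t • U) ⬝ᵥ (t • U))) • Y = c • U) ↔
      ((∃ f : ℝ, X = f • U) ∧ F.mulVec U = 0 ∧ ∃ h : ℝ, Y = h • U) := by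
  constructor
  · intro hv
    obtain ⟨c0, h0⟩ := hv 0
    obtain ⟨c1, h1⟩ := hv 1
    obtain ⟨c2, h2⟩ := hv (-1)
    simp [Matrix.mulVec_smul, dotProduct_smul, smul_dotProduct, hU, smul_smul] at h0 h1 h2
    rw [Matrix.mulVec_neg] at h2
    have hskew : U ⬝ᵥ (F *ᵥ U) = 0 := by
      have h := Matrix.dotProduct_mulVec U F U
      rw [← Matrix.mulVec_transpose, hF, Matrix.neg_mulVec, neg_dotProduct,
        dotProduct_comm] at h
      rw [dotProduct_comm]
      linarith
    have hFU : F *ᵥ U = (l - (c1 - c2) / 2) • U := by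
      linear_combination (norm := module) (-2⁻¹ : ℝ) • h1 + (2⁻¹ : ℝ) • h2
    have hk : l - (c1 - c2) / 2 = 0 := by
      have := congrArg (fun v => U ⬝ᵥ v) hFU
      simpa [dotProduct_smul, hU, hskew] using this.symm
    refine ⟨⟨c0, h0⟩, by rw [hFU, hk, zero_smul], ⟨c1 + c2 - 2 * c0 + 2 * (Y ⬝ᵥ U), ?_⟩⟩
    linear_combination (norm := module) h1 + h2 - (2 : ℝ) • h0
  · rintro ⟨⟨f, hX⟩, hFU, ⟨h, hY⟩⟩ t
    refine ⟨f + t * l - t ^ 2 * h / 2, ?_⟩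
    subst hX hY
    simp [Matrix.mulVec_smul, hFU, dotProduct_smul, smul_dotProduct, hU, smul_smul]
    module
end

section
/- The symmetry algebra of a circle in the flat conformal model has dimension (n-1)(n-2)/2 + 3, and hence the moduli space of conformal circles on Sⁿ, of dimension dim SO(n+1,1) − dim Sym(circle) = (n+2)(n+1)/2 − ((n-1)(n-2)/2 + 3), equals 3(n-1). -/
open Matrix

/-- Parameter space `(f, F, λ, h)` of the symmetry algebra of the circle with
velocity `U` and acceleration `C`: `F` skew-symmetric with `F·U = -f·C`. -/
def circleSymmetrySpace (n : ℕ) (U C : Fin n → ℝ) :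
    Submodule ℝ (ℝ × Matrix (Fin n) (Fin n) ℝ × ℝ × ℝ) where
  carrier := {p | p.2.1ᵀ = -p.2.1 ∧ p.2.1.mulVec U = -(p.1 • C)}
  add_mem' := by
    rintro a b ⟨ha1, ha2⟩ ⟨hb1, hb2⟩
    refine ⟨?_, ?_⟩
    · simp only [Prod.snd_add, Prod.fst_add, Matrix.transpose_add, ha1, hb1]
      abel
    · simp only [Prod.snd_add, Prod.fst_add, Matrix.add_mulVec, ha2, hb2, add_smul]
      abel
  zero_mem' := by simp
  smul_mem' := by
    rintro c a ⟨ha1, ha2⟩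
    refine ⟨?_, ?_⟩
    · simp only [Prod.smul_snd, Prod.smul_fst, Matrix.transpose_smul, ha1, smul_neg]
    · simp only [Prod.smul_snd, Prod.smul_fst, Matrix.smul_mulVec, ha2,
        smul_neg, smul_smul, smul_eq_mul]


namespace CircleAux
variable (n : ℕ)

/-- skew-symmetric matrices -/
def Skew : Submodule ℝ (Matrix (Fin n) (Fin n) ℝ) where
  carrier := {F | Fᵀ = -F}
  add_mem' := by
    intro a b ha hb
    simp only [Set.mem_setOf_eq] at *
    rw [transpose_add, ha, hb]; abel
  zero_mem' := by simp
  smul_mem' := by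
    intro c a ha
    simp only [Set.mem_setOf_eq] at *
    rw [transpose_smul, ha, smul_neg]

/-- index of strictly-upper-triangular entries -/
abbrev UT := {p : Fin n × Fin n // p.1 < p.2}

noncomputable def skewEquiv : Skew n ≃ₗ[ℝ] (UT n → ℝ) where
  toFun K := fun p => K.val p.1.1 p.1.2
  map_add' a b := rfl
  map_smul' c a := rfl
  invFun g := ⟨fun i j => if h : i < j then g ⟨(i,j), h⟩ else
      if h : j < i then -g ⟨(j,i), h⟩ else 0, by
    show _ = _
    ext i j
    show (if h : j < i then g ⟨(j,i), h⟩ else if h : i < j then -g ⟨(i,j), h⟩ else 0) =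
      -(if h : i < j then g ⟨(i,j), h⟩ else if h : j < i then -g ⟨(j,i), h⟩ else 0)
    rcases lt_trichotomy i j with h | h | h
    · rw [dif_neg (asymm h), dif_pos h, dif_pos h]
    · subst h; simp
    · rw [dif_pos h, dif_neg (asymm h), dif_pos h]; simp⟩
  left_inv K := by
    have hK : K.valᵀ = -K.val := K.2
    apply Subtype.ext
    ext i j
    show (if h : i < j then _ else _) = K.val i j
    rcases lt_trichotomy i j with h | h | h
    · rw [dif_pos h]
    · subst h
      rw [dif_neg (lt_irrefl i), dif_neg (lt_irrefl i)]
      have := congrFun (congrFun hK i) i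
      simp only [transpose_apply, Matrix.neg_apply] at this
      linarith
    · rw [dif_neg (asymm h), dif_pos h]
      have := congrFun (congrFun hK j) i
      simp only [transpose_apply, Matrix.neg_apply] at this
      linarith
  right_inv g := by
    funext p
    show (if h : p.1.1 < p.1.2 then _ else _) = g p
    rw [dif_pos p.2]

def utEquiv : UT n ≃ (Σ j : Fin n, Fin j.1) where
  toFun p := ⟨p.1.2, ⟨p.1.1.1, p.2⟩⟩
  invFun q := ⟨(⟨q.2.1, lt_trans q.2.2 q.1.2⟩, q.1), q.2.2⟩
  left_inv p := by ext <;> rfl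
  right_inv q := by ext <;> rfl

lemma card_ut : Fintype.card (UT n) = n.choose 2 := by
  rw [Fintype.card_congr (utEquiv n), Fintype.card_sigma]
  simp only [Fintype.card_fin]
  rw [Fin.sum_univ_eq_sum_range (fun i => i), Finset.sum_range_id, Nat.choose_two_right]

lemma finrank_skew : Module.finrank ℝ (Skew n) = n.choose 2 := by
  rw [LinearEquiv.finrank_eq (skewEquiv n), Module.finrank_fintype_fun_eq_card, card_ut]

end CircleAux
section
open CircleAux
variable (n : ℕ) (U : Fin n → ℝ)

/-- evaluation map on skew matrices -/
def evalU : Skew n →ₗ[ℝ] (Fin n → ℝ) where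
  toFun K := K.val.mulVec U
  map_add' a b := by simp [Matrix.add_mulVec]
  map_smul' c a := by simp [Matrix.smul_mulVec]

/-- the dot-with-U functional -/
def dotU : (Fin n → ℝ) →ₗ[ℝ] ℝ where
  toFun v := v ⬝ᵥ U
  map_add' a b := by simp [add_dotProduct]
  map_smul' c a := by simp [smul_dotProduct]

lemma vecMulVec_mulVec (v w x : Fin n → ℝ) :
    (vecMulVec v w).mulVec x = (w ⬝ᵥ x) • v := by
  funext i
  simp [Matrix.mulVec, Matrix.vecMulVec_apply, dotProduct, Finset.mul_sum, mul_comm,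
    mul_left_comm]

lemma range_evalU (hU : U ⬝ᵥ U = 1) : LinearMap.range (evalU n U) = LinearMap.ker (dotU n U) := by
  apply le_antisymm
  · rintro v ⟨K, rfl⟩
    have hK : K.valᵀ = -K.val := K.2
    simp only [LinearMap.mem_ker, dotU, evalU, LinearMap.coe_mk, AddHom.coe_mk]
    have h1 : K.val.mulVec U ⬝ᵥ U = U ⬝ᵥ K.val.mulVec U := dotProduct_comm _ _
    have h2 : U ⬝ᵥ K.val.mulVec U = Matrix.vecMul U K.val ⬝ᵥ U := dotProduct_mulVec U K.val U
    have h3 : Matrix.vecMul U K.val = (K.valᵀ).mulVec U := (Matrix.mulVec_transpose _ _).symm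
    have h4 : (K.valᵀ).mulVec U = -(K.val.mulVec U) := by rw [hK, Matrix.neg_mulVec]
    have : K.val.mulVec U ⬝ᵥ U = -(K.val.mulVec U ⬝ᵥ U) := by
      conv_lhs => rw [h1, h2, h3, h4]
      rw [neg_dotProduct]
    linarith
  · intro v hv
    simp only [LinearMap.mem_ker, dotU, LinearMap.coe_mk, AddHom.coe_mk] at hv
    refine ⟨⟨vecMulVec v U - vecMulVec U v, ?_⟩, ?_⟩
    · show _ = _
      ext i j
      simp [Matrix.vecMulVec_apply, mul_comm]
    · show (vecMulVec v U - vecMulVec U v).mulVec U = v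
      rw [Matrix.sub_mulVec, _root_.vecMulVec_mulVec, _root_.vecMulVec_mulVec, hU, hv]
      simp

lemma finrank_ker_dotU (hU : U ⬝ᵥ U = 1) : Module.finrank ℝ (LinearMap.ker (dotU n U)) = n - 1 := by
  have hr : LinearMap.range (dotU n U) = ⊤ := by
    rw [LinearMap.range_eq_top]
    intro c
    refine ⟨c • U, ?_⟩
    show (c • U) ⬝ᵥ U = c
    rw [smul_dotProduct, hU, smul_eq_mul, mul_one]
  have := LinearMap.finrank_range_add_finrank_ker (dotU n U)
  rw [hr, Module.finrank_fintype_fun_eq_card, Fintype.card_fin] at this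
  simp only [finrank_top, Module.finrank_self] at this
  omega

lemma choose2_succ (m : ℕ) : (m+1).choose 2 = m.choose 2 + m := by
  rw [show (2:ℕ) = 1+1 from rfl, Nat.choose_succ_succ', Nat.choose_one_right]
  omega

lemma finrank_ker_evalU (hU : U ⬝ᵥ U = 1) (hn : 1 ≤ n) :
    Module.finrank ℝ (LinearMap.ker (evalU n U)) = (n-1).choose 2 := by
  have h1 := LinearMap.finrank_range_add_finrank_ker (evalU n U)
  rw [finrank_skew, range_evalU n U hU, finrank_ker_dotU n U hU] at h1
  have h2 := choose2_succ (n-1)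
  have h3 : n - 1 + 1 = n := Nat.succ_pred_eq_of_pos hn
  rw [h3] at h2
  omega

end
section Main
open CircleAux

variable (n : ℕ) (U C : Fin n → ℝ)

/-- skew matrices killing `U`, as a submodule of the matrix space -/
def SkewKer : Submodule ℝ (Matrix (Fin n) (Fin n) ℝ) where
  carrier := {K | Kᵀ = -K ∧ K.mulVec U = 0}
  add_mem' := by
    rintro a b ⟨ha1, ha2⟩ ⟨hb1, hb2⟩
    refine ⟨?_, ?_⟩
    · rw [Matrix.transpose_add, ha1, hb1]; abel
    · rw [Matrix.add_mulVec, ha2, hb2, add_zero]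
  zero_mem' := by simp
  smul_mem' := by
    rintro c a ⟨ha1, ha2⟩
    refine ⟨?_, ?_⟩
    · rw [Matrix.transpose_smul, ha1, smul_neg]
    · rw [Matrix.smul_mulVec, ha2, smul_zero]

noncomputable def skewKerEquiv : (SkewKer n U) ≃ₗ[ℝ] (LinearMap.ker (evalU n U)) where
  toFun K := ⟨⟨K.1, K.2.1⟩, K.2.2⟩
  map_add' a b := rfl
  map_smul' c a := rfl
  invFun K := ⟨K.1.1, K.1.2, K.2⟩
  left_inv K := rfl
  right_inv K := rfl

lemma finrank_skewKer (hU : U ⬝ᵥ U = 1) (hn : 1 ≤ n) :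
    Module.finrank ℝ (SkewKer n U) = (n-1).choose 2 := by
  have h : Module.finrank ℝ (SkewKer n U) =
      Module.finrank ℝ (LinearMap.ker (evalU n U)) :=
    LinearEquiv.finrank_eq (skewKerEquiv n U)
  rw [h, finrank_ker_evalU n U hU hn]

/-- The particular skew solution with `F₀ U = C`. -/
def Fzero : Matrix (Fin n) (Fin n) ℝ := vecMulVec C U - vecMulVec U C

lemma Fzero_skew : (Fzero n U C)ᵀ = -(Fzero n U C) := by
  ext i j
  simp [Fzero, Matrix.vecMulVec_apply, mul_comm]

lemma Fzero_mulVec (hU : U ⬝ᵥ U = 1) (hUC : U ⬝ᵥ C = 0) :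
    (Fzero n U C).mulVec U = C := by
  rw [Fzero, Matrix.sub_mulVec, vecMulVec_mulVec, vecMulVec_mulVec, hU]
  rw [dotProduct_comm C U, hUC]
  simp

lemma mem_circle_iff (p : ℝ × Matrix (Fin n) (Fin n) ℝ × ℝ × ℝ) :
    p ∈ circleSymmetrySpace n U C ↔ p.2.1ᵀ = -p.2.1 ∧ p.2.1.mulVec U = -(p.1 • C) :=
  Iff.rfl

noncomputable def circleEquiv (hU : U ⬝ᵥ U = 1) (hUC : U ⬝ᵥ C = 0) :
    (circleSymmetrySpace n U C) ≃ₗ[ℝ] ℝ × (SkewKer n U) × ℝ × ℝ where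
  toFun p :=
    (p.1.1, ⟨p.1.2.1 + p.1.1 • Fzero n U C, by
      constructor
      · show _ = _
        rw [Matrix.transpose_add, Matrix.transpose_smul, p.2.1, Fzero_skew]
        rw [smul_neg]; abel
      · show (p.1.2.1 + p.1.1 • Fzero n U C).mulVec U = 0
        rw [Matrix.add_mulVec, Matrix.smul_mulVec, p.2.2,
          Fzero_mulVec n U C hU hUC]
        abel⟩, p.1.2.2.1, p.1.2.2.2)
  map_add' a b := by
    refine Prod.ext rfl (Prod.ext ?_ rfl)
    apply Subtype.ext
    show (a.1.2.1 + b.1.2.1) + (a.1.1 + b.1.1) • Fzero n U C =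
      (a.1.2.1 + a.1.1 • Fzero n U C) + (b.1.2.1 + b.1.1 • Fzero n U C)
    rw [add_smul]; abel
  map_smul' c a := by
    refine Prod.ext rfl (Prod.ext ?_ rfl)
    apply Subtype.ext
    show c • a.1.2.1 + (c * a.1.1) • Fzero n U C = c • (a.1.2.1 + a.1.1 • Fzero n U C)
    rw [smul_add, mul_smul]
  invFun q := ⟨(q.1, q.2.1.1 - q.1 • Fzero n U C, q.2.2.1, q.2.2.2), by
    rw [mem_circle_iff]
    constructor
    · show (q.2.1.1 - q.1 • Fzero n U C)ᵀ = _
      rw [Matrix.transpose_sub, Matrix.transpose_smul, q.2.1.2.1, Fzero_skew, smul_neg]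
      simp only [sub_eq_add_neg, neg_add, neg_neg]
    · show (q.2.1.1 - q.1 • Fzero n U C).mulVec U = -(q.1 • C)
      rw [Matrix.sub_mulVec, q.2.1.2.2, Matrix.smul_mulVec, Fzero_mulVec n U C hU hUC]
      abel⟩
  left_inv p := by
    apply Subtype.ext
    refine Prod.ext rfl (Prod.ext ?_ rfl)
    show p.1.2.1 + p.1.1 • Fzero n U C - p.1.1 • Fzero n U C = p.1.2.1
    abel
  right_inv q := by
    refine Prod.ext rfl (Prod.ext ?_ rfl)
    apply Subtype.ext
    show q.2.1.1 - q.1 • Fzero n U C + q.1 • Fzero n U C = q.2.1.1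
    abel

end Main


set_option synthInstance.maxHeartbeats 1000000 in
/-- The symmetry algebra of a circle in the flat conformal model has dimension
`(n-1)(n-2)/2 + 3`, and the moduli space of conformal circles on `Sⁿ` has
dimension `dim SO(n+1,1) - dim Sym(circle) = 3(n-1)`. -/
theorem dim_symmetry_algebra_of_circle_and_moduli (n : ℕ) (hn : 1 ≤ n)
    (U C : Fin n → ℝ) (hU : U ⬝ᵥ U = 1) (hUC : U ⬝ᵥ C = 0) :
    Module.finrank ℝ (circleSymmetrySpace n U C) = (n - 1) * (n - 2) / 2 + 3 ∧
      (n + 2) * (n + 1) / 2 - ((n - 1) * (n - 2) / 2 + 3) = 3 * (n - 1) := by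
  open CircleAux in
  have hdiv : (n - 1) * (n - 2) / 2 = (n-1).choose 2 := by
    rw [Nat.choose_two_right]
    congr 1 <;> omega
  have hdiv2 : (n + 2) * (n + 1) / 2 = (n+2).choose 2 := by
    rw [Nat.choose_two_right]
    congr 2 <;> omega
  constructor
  · have hfe : Module.finrank ℝ (circleSymmetrySpace n U C) =
        Module.finrank ℝ (ℝ × (SkewKer n U) × ℝ × ℝ) :=
      LinearEquiv.finrank_eq (circleEquiv n U C hU hUC)
    rw [hfe, Module.finrank_prod, Module.finrank_prod, Module.finrank_prod,
      Module.finrank_self, finrank_skewKer n U hU hn, hdiv]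
    omega
  · rw [hdiv, hdiv2]
    have h1 := choose2_succ n
    have h2 := choose2_succ (n+1)
    have h3 := choose2_succ (n-1)
    have h4 : n - 1 + 1 = n := by omega
    rw [h4] at h3
    have h5 : n + 1 + 1 = n + 2 := by omega
    rw [h5] at h2
    omega
end

section
/- Let g be the Lie algebra sl(n+2,ℝ), written in (1,n,1) block form, i.e. matrices M with blocks M = [[a, Z, b],[X, C, W],[d, Y, e]] where a,b,d,e ∈ ℝ, X,W ∈ ℝⁿ (columns), Z,Y ∈ ℝⁿ (rows), C ∈ Mₙ(ℝ), and a + tr C + e = 0. Fix U, V ∈ ℝⁿ with ⟨V,U⟩ = 1 and set s = { M : Z = h·Vᵀ, b = 0, X = f·U, W = h·U, d = 0, Y = f·Vᵀ, C·U = ((a+e)/2)·U, Vᵀ·C = ((a+e)/2)·Vᵀ, for some f,h ∈ ℝ }. Then s is a Lie subalgebra of sl(n+2,ℝ), i.e. it is closed under the matrix commutator. -/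
open Matrix

/-- The block matrix `[[a, h·Vᵀ, 0],[f·U, C, h·U],[0, f·Vᵀ, e]]` in
`(1,n,1)` block form. -/
def clBlock (n : ℕ) (a e f h : ℝ) (C : Matrix (Fin n) (Fin n) ℝ)
    (U V : Fin n → ℝ) :
    Matrix (Fin 1 ⊕ Fin n ⊕ Fin 1) (Fin 1 ⊕ Fin n ⊕ Fin 1) ℝ :=
  Matrix.of fun i j =>
    match i, j with
    | .inl _, .inl _ => a
    | .inl _, .inr (.inl j) => h * V j
    | .inl _, .inr (.inr _) => 0
    | .inr (.inl i), .inl _ => f * U i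
    | .inr (.inl i), .inr (.inl j) => C i j
    | .inr (.inl i), .inr (.inr _) => h * U i
    | .inr (.inr _), .inl _ => 0
    | .inr (.inr _), .inr (.inl j) => f * V j
    | .inr (.inr _), .inr (.inr _) => e

/-- The symmetry algebra `s` of a contact distinguished curve in the flat
contact Legendrean model. -/
def clSymmetryAlgebra (n : ℕ) (U V : Fin n → ℝ) :
    Set (Matrix (Fin 1 ⊕ Fin n ⊕ Fin 1) (Fin 1 ⊕ Fin n ⊕ Fin 1) ℝ) :=
  {M | ∃ (a e f h : ℝ) (C : Matrix (Fin n) (Fin n) ℝ),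
    a + Matrix.trace C + e = 0 ∧
    C.mulVec U = ((a + e) / 2) • U ∧
    V ᵥ* C = ((a + e) / 2) • V ∧
    M = clBlock n a e f h C U V}

/-- `s` is a Lie subalgebra of `sl(n+2,ℝ)`: its members are trace-free and it is
closed under the matrix commutator. -/
theorem clSymmetryAlgebra_closed (n : ℕ) (U V : Fin n → ℝ) (hUV : V ⬝ᵥ U = 1) :
    (∀ M ∈ clSymmetryAlgebra n U V, Matrix.trace M = 0) ∧
    ∀ M ∈ clSymmetryAlgebra n U V, ∀ N ∈ clSymmetryAlgebra n U V,
      M * N - N * M ∈ clSymmetryAlgebra n U V := by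
  have hd : ∑ i, V i * U i = 1 := hUV
  constructor
  · rintro M ⟨a, e, f, h, C, htr, hCU, hVC, rfl⟩
    have : Matrix.trace C = ∑ i, C i i := rfl
    simp only [clBlock, Matrix.trace, Matrix.diag, Fintype.sum_sum_type,
      Fin.sum_univ_one, Matrix.of_apply]
    rw [this] at htr
    linarith
  · rintro M ⟨a, e, f, h, C, htr, hCU, hVC, rfl⟩ N ⟨a', e', f', h', C', htr', hCU', hVC', rfl⟩
    have hU : ∀ i, ∑ j, C i j * U j = (a + e) / 2 * U i := fun i => congrFun hCU i
    have hU' : ∀ i, ∑ j, C' i j * U j = (a' + e') / 2 * U i := fun i => congrFun hCU' i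
    have hV : ∀ j, ∑ i, V i * C i j = (a + e) / 2 * V j := fun j => congrFun hVC j
    have hV' : ∀ j, ∑ i, V i * C' i j = (a' + e') / 2 * V j := fun j => congrFun hVC' j
    refine ⟨h * f' - h' * f, -(h * f' - h' * f),
      f * (a' - e') / 2 - f' * (a - e) / 2, h' * (a - e) / 2 - h * (a' - e') / 2,
      C * C' - C' * C, ?_, ?_, ?_, ?_⟩
    · simp [Matrix.trace_sub, Matrix.trace_mul_comm C C']
    · have : (((h * f' - h' * f) + -(h * f' - h' * f)) / 2 : ℝ) = 0 := by ring
      rw [this, Matrix.sub_mulVec, ← Matrix.mulVec_mulVec, ← Matrix.mulVec_mulVec,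
        hCU, hCU', Matrix.mulVec_smul, Matrix.mulVec_smul, hCU, hCU']
      simp [smul_smul, mul_comm]
    · have : (((h * f' - h' * f) + -(h * f' - h' * f)) / 2 : ℝ) = 0 := by ring
      rw [this, Matrix.vecMul_sub, ← Matrix.vecMul_vecMul, ← Matrix.vecMul_vecMul,
        hVC, hVC', Matrix.smul_vecMul, Matrix.smul_vecMul, hVC, hVC']
      simp [smul_smul, mul_comm]
    · ext i j
      have e1 : ∀ (c d : ℝ), ∑ k, c * V k * (d * U k) = c * d := by
        intro c d
        rw [show (c * d : ℝ) = c * d * ∑ i, V i * U i by rw [hd]; ring, Finset.mul_sum]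
        exact Finset.sum_congr rfl fun k _ => by ring
      rcases i with i | i | i <;> rcases j with j | j | j <;>
        simp only [Matrix.sub_apply, Matrix.mul_apply, clBlock, Matrix.of_apply,
          Fintype.sum_sum_type, Fin.sum_univ_one]
      · rw [e1, e1]; ring
      · have r1 : ∑ k, h * V k * C' k j = h * ((a' + e') / 2 * V j) := by
          rw [← hV' j, Finset.mul_sum]; exact Finset.sum_congr rfl fun k _ => by ring
        have r2 : ∑ k, h' * V k * C k j = h' * ((a + e) / 2 * V j) := by
          rw [← hV j, Finset.mul_sum]; exact Finset.sum_congr rfl fun k _ => by ring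
        rw [r1, r2]; ring
      · have r1 : ∑ k, h * V k * (h' * U k) = h * h' := e1 h h'
        have r2 : ∑ k, h' * V k * (h * U k) = h' * h := e1 h' h
        rw [r1, r2]; ring
      · have r1 : ∑ k, C i k * (f' * U k) = f' * ((a + e) / 2 * U i) := by
          rw [← hU i, Finset.mul_sum]; exact Finset.sum_congr rfl fun k _ => by ring
        have r2 : ∑ k, C' i k * (f * U k) = f * ((a' + e') / 2 * U i) := by
          rw [← hU' i, Finset.mul_sum]; exact Finset.sum_congr rfl fun k _ => by ring
        rw [r1, r2]; ring
      · ring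
      · have r1 : ∑ k, C i k * (h' * U k) = h' * ((a + e) / 2 * U i) := by
          rw [← hU i, Finset.mul_sum]; exact Finset.sum_congr rfl fun k _ => by ring
        have r2 : ∑ k, C' i k * (h * U k) = h * ((a' + e') / 2 * U i) := by
          rw [← hU' i, Finset.mul_sum]; exact Finset.sum_congr rfl fun k _ => by ring
        rw [r1, r2]; ring
      · rw [e1, e1]; ring
      · have r1 : ∑ k, f * V k * C' k j = f * ((a' + e') / 2 * V j) := by
          rw [← hV' j, Finset.mul_sum]; exact Finset.sum_congr rfl fun k _ => by ring
        have r2 : ∑ k, f' * V k * C k j = f' * ((a + e) / 2 * V j) := by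
          rw [← hV j, Finset.mul_sum]; exact Finset.sum_congr rfl fun k _ => by ring
        rw [r1, r2]; ring
      · rw [e1, e1]; ring
end

section
/- Let p ⊂ sl(n+2,ℝ) be the block-upper-triangular parabolic (matrices [[a,Z,b],[0,C,W],[0,0,e]]) and let V₀ = [[0,0,0],[U,0,0],[0,Vᵀ,0]] with ⟨V,U⟩ = 1. Define p₁ = {X ∈ p : [X,V₀] ∈ p + ℝ·V₀}. Then p₁ = { [[a,Z,b],[0,C,W],[0,0,e]] : C·U = ((a+e)/2)·U and Vᵀ·C = ((a+e)/2)·Vᵀ }. -/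
open Matrix

/-- The block-upper-triangular parabolic subalgebra `p ⊂ sl(n+2,ℝ)` in the
`(1,n,1)` block decomposition. -/
def clParabolic (n : ℕ) :
    Set (Matrix (Fin 1 ⊕ Fin n ⊕ Fin 1) (Fin 1 ⊕ Fin n ⊕ Fin 1) ℝ) :=
  {M | Matrix.trace M = 0 ∧
    (∀ (i : Fin n) (j : Fin 1), M (.inr (.inl i)) (.inl j) = 0) ∧
    (∀ (i j : Fin 1), M (.inr (.inr i)) (.inl j) = 0) ∧
    (∀ (i : Fin 1) (j : Fin n), M (.inr (.inr i)) (.inr (.inl j)) = 0)}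

/-- The element `V₀ = [[0,0,0],[U,0,0],[0,Vᵀ,0]]` of `sl(n+2,ℝ) \ p`. -/
def clV₀ (n : ℕ) (U V : Fin n → ℝ) :
    Matrix (Fin 1 ⊕ Fin n ⊕ Fin 1) (Fin 1 ⊕ Fin n ⊕ Fin 1) ℝ :=
  Matrix.of fun i j =>
    match i, j with
    | .inr (.inl i), .inl _ => U i
    | .inr (.inr _), .inr (.inl j) => V j
    | _, _ => 0

/-- The `C`-block of a matrix in the `(1,n,1)` block decomposition. -/
def cBlock (n : ℕ)
    (M : Matrix (Fin 1 ⊕ Fin n ⊕ Fin 1) (Fin 1 ⊕ Fin n ⊕ Fin 1) ℝ) :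
    Matrix (Fin n) (Fin n) ℝ :=
  Matrix.of fun i j => M (.inr (.inl i)) (.inr (.inl j))

/-- First step of the Doubrov–Kruglikov–Rabinovich algorithm in the contact
Legendrean setting:
`p₁ = {X ∈ p : [X,V₀] ∈ p + ℝ·V₀}` consists exactly of those upper-triangular
matrices whose middle block `C` satisfies `C·U = ((a+e)/2)·U` and
`Vᵀ·C = ((a+e)/2)·Vᵀ`. -/
theorem clP1_eq (n : ℕ) (U V : Fin n → ℝ) (hUV : V ⬝ᵥ U = 1) :
    {M ∈ clParabolic n | ∃ c : ℝ,
        M * clV₀ n U V - clV₀ n U V * M - c • clV₀ n U V ∈ clParabolic n} =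
      {M ∈ clParabolic n |
        (cBlock n M).mulVec U
            = ((M (.inl 0) (.inl 0) + M (.inr (.inr 0)) (.inr (.inr 0))) / 2) • U ∧
          V ᵥ* cBlock n M
            = ((M (.inl 0) (.inl 0) + M (.inr (.inr 0)) (.inr (.inr 0))) / 2) • V} := by
  have htr : Matrix.trace (clV₀ n U V) = 0 := by
    simp [Matrix.trace, clV₀, Fintype.sum_sum_type, Matrix.diag]
  ext M
  simp only [Set.mem_sep_iff, Set.mem_setOf_eq]
  refine and_congr_right fun hp => ?_
  obtain ⟨h0, h1, h2, h3⟩ := hp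
  set a := M (.inl 0) (.inl 0) with ha
  set e := M (.inr (.inr 0)) (.inr (.inr 0)) with he
  have key : ∀ c : ℝ,
      (M * clV₀ n U V - clV₀ n U V * M - c • clV₀ n U V ∈ clParabolic n) ↔
      ((cBlock n M).mulVec U = (a + c) • U ∧ V ᵥ* cBlock n M = (e - c) • V) := by
    intro c
    constructor
    · rintro ⟨-, hA, -, hB⟩
      constructor
      · funext i
        have := hA i 0
        simp only [Matrix.sub_apply, Matrix.smul_apply, Matrix.mul_apply, clV₀,
          Fintype.sum_sum_type, Matrix.of_apply, Fin.sum_univ_one, smul_eq_mul] at this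
        simp only [cBlock, Matrix.mulVec, dotProduct, Matrix.of_apply, Pi.smul_apply,
          smul_eq_mul]
        simp only [mul_zero, add_zero, zero_add, zero_mul, sub_eq_zero,
          Finset.sum_const_zero] at this
        rw [← ha] at this
        linear_combination this
      · funext j
        have := hB 0 j
        simp only [Matrix.sub_apply, Matrix.smul_apply, Matrix.mul_apply, clV₀,
          Fintype.sum_sum_type, Matrix.of_apply, Fin.sum_univ_one, smul_eq_mul] at this
        simp only [cBlock, Matrix.vecMul, dotProduct, Matrix.of_apply, Pi.smul_apply,
          smul_eq_mul]
        simp only [mul_zero, add_zero, zero_add, zero_mul,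
          Finset.sum_const_zero] at this
        rw [← he] at this
        linear_combination -this
    · rintro ⟨hA, hB⟩
      refine ⟨?_, ?_, ?_, ?_⟩
      · rw [Matrix.trace_sub, Matrix.trace_sub, Matrix.trace_smul,
          Matrix.trace_mul_comm, htr]
        simp
      · intro i j
        have hAi := congrFun hA i
        simp only [cBlock, Matrix.mulVec, dotProduct, Matrix.of_apply, Pi.smul_apply,
          smul_eq_mul] at hAi
        have hj : j = 0 := Subsingleton.elim _ _
        subst hj
        simp only [Matrix.sub_apply, Matrix.smul_apply, Matrix.mul_apply, clV₀,
          Fintype.sum_sum_type, Matrix.of_apply, Fin.sum_univ_one, smul_eq_mul]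
        simp only [mul_zero, add_zero, zero_add, zero_mul, Finset.sum_const_zero,
          neg_zero]
        rw [← ha, hAi]
        ring
      · intro i j
        have hi : i = 0 := Subsingleton.elim _ _
        have hj : j = 0 := Subsingleton.elim _ _
        subst hi; subst hj
        simp only [Matrix.sub_apply, Matrix.smul_apply, Matrix.mul_apply, clV₀,
          Fintype.sum_sum_type, Matrix.of_apply, Fin.sum_univ_one, smul_eq_mul]
        simp [h1, h3]
      · intro i j
        have hi : i = 0 := Subsingleton.elim _ _
        subst hi
        have hBj := congrFun hB j
        simp only [cBlock, Matrix.vecMul, dotProduct, Matrix.of_apply, Pi.smul_apply,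
          smul_eq_mul] at hBj
        simp only [Matrix.sub_apply, Matrix.smul_apply, Matrix.mul_apply, clV₀,
          Fintype.sum_sum_type, Matrix.of_apply, Fin.sum_univ_one, smul_eq_mul]
        simp only [mul_zero, add_zero, zero_add, zero_mul, Finset.sum_const_zero]
        rw [← he, hBj]
        ring
  simp only [key]
  constructor
  · rintro ⟨c, hA, hB⟩
    have hac : a + c = e - c := by
      have e1 : V ⬝ᵥ (cBlock n M).mulVec U = a + c := by
        rw [hA, dotProduct_smul, hUV]; simp
      have e2 : V ⬝ᵥ (cBlock n M).mulVec U = e - c := by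
        rw [Matrix.dotProduct_mulVec, hB, smul_dotProduct, hUV]; simp
      rw [e1] at e2; linarith
    have h1' : (a + e) / 2 = a + c := by linarith
    have h2' : (a + e) / 2 = e - c := by linarith
    exact ⟨by rw [h1']; exact hA, by rw [h2']; exact hB⟩
  · rintro ⟨hA, hB⟩
    exact ⟨(e - a) / 2, by rw [show a + (e - a) / 2 = (a + e) / 2 by ring]; exact hA,
      by rw [show e - (e - a) / 2 = (a + e) / 2 by ring]; exact hB⟩
end
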